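/- arXiv:2208.12375 — 3 statements merged into one kernel-verified Lean document; each statement's English description precedes it below -/
import Mathlib

section
/- Let a=(a_1,...,a_n) and e=(e_1,...,e_n) be real sequences, and write M(m,k) for the (m,k) entry of M_{e→a}. Then for all 0 ≤ k ≤ m ≤ n with k ≤ n-1, M(m,k) = Σ_{ℓ=0}^{m-k} (-1)^ℓ · h_{m-k-ℓ}(a_1,...,a_{k+1}) · s_ℓ(e_1,...,e_m), where h_ℓ(x_1,...,x_t) denotes the complete homogeneous symmetric polynomial of degree ℓ in x_1,...,x_t and s_ℓ(x_1,...,x_t) denotes the elementary symmetric polynomial of degree ℓ in x_1,...,x_t. -/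
/-!
Write `N_k = ∏_{i=1}^k (X - a_i)` for the Newton basis. Vieta gives
`∏_{i=1}^m (X - e_i) = ∑_ℓ (-1)^ℓ s_ℓ(e_1, …, e_m) X^{m-ℓ}`, and induction on `j`, using the
recursion `h_{d+1}(a_1, …, a_{k+1}) = h_{d+1}(a_1, …, a_k) + a_{k+1} h_d(a_1, …, a_{k+1})`
together with `X N_k = N_{k+1} + a_{k+1} N_k`, gives `X^j = ∑_{k+d=j} h_d(a_1, …, a_{k+1}) N_k`.
Substituting and collecting the coefficient of `N_k` yields the formula; it is the entry of
`M_{e→a}` because the `N_k`, having degree `k`, form a basis of `ℝ[X]`.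
-/

open Polynomial Finset

/-- `IsCOB n a e M` says that `M` is the change-of-basis matrix `M_{e→a}`:
for each `0 ≤ m ≤ n`, the entry `M m k` is the coefficient of `∏_{i=1}^k (x - a_i)`
in the expansion of `∏_{i=1}^m (x - e_i)` in the basis
`1, (x-a₁), …, ∏_{i=1}^n (x-a_i)`.  (Sequences are 0-indexed: `a i` is `a_{i+1}`.)
Since that basis expansion is unique, this characterizes `M_{e→a}` uniquely. -/
def IsCOB (n : ℕ) (a e : ℕ → ℝ) (M : Matrix (Fin (n+1)) (Fin (n+1)) ℝ) : Prop :=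
  ∀ m : Fin (n+1),
    (∏ i ∈ Finset.range (m : ℕ), (X - C (e i))) =
      ∑ k : Fin (n+1), C (M m k) * ∏ i ∈ Finset.range (k : ℕ), (X - C (a i))

/-- `esymmEval t ℓ x` is the elementary symmetric polynomial `s_ℓ(x_1, …, x_t)`
evaluated at `x_1 = x 0, …, x_t = x (t-1)`. -/
def esymmEval (t ℓ : ℕ) (x : ℕ → ℝ) : ℝ :=
  ∑ S ∈ (Finset.range t).powersetCard ℓ, ∏ i ∈ S, x i

/-- `hsymmEval t ℓ x` is the complete homogeneous symmetric polynomial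
`h_ℓ(x_1, …, x_t)` evaluated at `x_1 = x 0, …, x_t = x (t-1)`: the sum over all
multisets of size `ℓ` of variables of the corresponding monomial. -/
def hsymmEval (t ℓ : ℕ) (x : ℕ → ℝ) : ℝ :=
  ∑ s ∈ (Finset.range t).sym ℓ, (Multiset.map x s.1).prod

open Lagrange

lemma hsymmEval_zero_right (t : ℕ) (x : ℕ → ℝ) : hsymmEval t 0 x = 1 := by
  rw [hsymmEval, sym_zero, sum_singleton]; rfl

lemma hsymmEval_zero_succ (ℓ : ℕ) (x : ℕ → ℝ) : hsymmEval 0 (ℓ + 1) x = 0 := by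
  simp [hsymmEval]

lemma hsymmEval_succ_succ (t ℓ : ℕ) (x : ℕ → ℝ) :
    hsymmEval (t + 1) (ℓ + 1) x = hsymmEval t (ℓ + 1) x + x t * hsymmEval (t + 1) ℓ x := by
  unfold hsymmEval
  -- split by whether `t` occurs; erasing one `t` maps the multisets containing it bijectively
  -- onto `(range (t + 1)).sym ℓ`
  rw [← sum_filter_not_add_sum_filter _ (t ∈ ·)]
  congr 1
  · congr 1
    ext s
    simp only [mem_filter, mem_sym_iff, mem_range]
    refine ⟨fun ⟨h, ht⟩ i hi => lt_of_le_of_ne (Nat.lt_succ_iff.mp (h i hi)) ?_,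
      fun h => ⟨fun i hi => (h i hi).trans (Nat.lt_succ_self t), fun ht => (h t ht).false⟩⟩
    rintro rfl; exact ht hi
  · rw [mul_sum]
    refine sum_bij' (fun s hs => s.erase t (mem_filter.mp hs).2) (fun s _ => Sym.cons t s)
      (fun s hs => ?_) (fun s hs => ?_) (fun s _ => Sym.cons_erase _)
      (fun s _ => Sym.erase_cons_head s t) (fun s hs => ?_)
    · rw [mem_filter, mem_sym_iff] at hs
      exact mem_sym_iff.mpr fun i hi => hs.1 i (Multiset.mem_of_mem_erase hi)
    · rw [mem_sym_iff] at hs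
      refine mem_filter.mpr ⟨mem_sym_iff.mpr fun i hi => ?_, Sym.mem_cons_self t s⟩
      rcases Sym.mem_cons.mp hi with rfl | hi
      · exact self_mem_range_succ i
      · exact hs i hi
    · conv_lhs => rw [← Multiset.cons_erase (mem_filter.mp hs).2, Multiset.map_cons,
        Multiset.prod_cons]
      rfl

section NewtonBasis

variable {R : Type*} [CommRing R]

lemma X_mul_nodal_range (a : ℕ → R) (k : ℕ) :
    X * nodal (range k) a = nodal (range (k + 1)) a + C (a k) * nodal (range k) a := by
  rw [nodal, nodal, prod_range_succ]; ring

noncomputable def newtonSequence [Nontrivial R] (a : ℕ → R) : Polynomial.Sequence R where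
  elems' k := nodal (range k) a
  degree_eq' k := by rw [degree_nodal, card_range]

noncomputable def newtonBasis [IsDomain R] (a : ℕ → R) : Module.Basis ℕ R R[X] :=
  (newtonSequence a).basis fun k =>
    (show ((newtonSequence a) k).Monic from nodal_monic (s := range k) (v := a)).leadingCoeff ▸
      isUnit_one

lemma newtonBasis_apply [IsDomain R] (a : ℕ → R) (k : ℕ) :
    newtonBasis a k = nodal (range k) a :=
  Sequence.basis_eq_self _ _ k

end NewtonBasis

lemma X_pow_eq_sum_hsymmEval_mul_nodal (a : ℕ → ℝ) (j : ℕ) :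
    (X : ℝ[X]) ^ j =
      ∑ p ∈ antidiagonal j, C (hsymmEval (p.1 + 1) p.2 a) * nodal (range p.1) a := by
  induction j with
  | zero => simp [hsymmEval_zero_right, nodal]
  | succ j ih =>
    let f : ℕ × ℕ → ℝ[X] := fun p => C (hsymmEval p.1 p.2 a) * nodal (range p.1) a
    -- peel the sum of `f` over `antidiagonal (j + 1)` at either end
    have hshift := (Nat.sum_antidiagonal_succ (n := j) (f := f)).symm.trans
      (Nat.sum_antidiagonal_succ' (n := j) (f := f))
    simp only [f, hsymmEval_zero_succ, hsymmEval_zero_right, map_zero, map_one, zero_mul,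
      zero_add, one_mul] at hshift
    rw [pow_succ', ih, mul_sum, Nat.sum_antidiagonal_succ']
    simp only [hsymmEval_succ_succ, hsymmEval_zero_right, map_one, one_mul, map_add, add_mul,
      sum_add_distrib]
    rw [← add_assoc, ← hshift, ← sum_add_distrib]
    refine sum_congr rfl fun p _ => ?_
    rw [mul_left_comm, X_mul_nodal_range, map_mul]
    ring

lemma prod_X_sub_C_eq_sum_esymmEval (e : ℕ → ℝ) (m : ℕ) :
    ∏ i ∈ range m, (X - C (e i)) =
      ∑ ℓ ∈ range (m + 1), C ((-1) ^ ℓ * esymmEval m ℓ e) * X ^ (m - ℓ) := by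
  have vieta := Multiset.prod_X_sub_X_eq_sum_esymm ((range m).val.map e)
  simp only [Multiset.map_map, Function.comp_def, Multiset.card_map, card_val, card_range,
    esymm_map_val] at vieta
  rw [prod_eq_multiset_prod, vieta]
  refine sum_congr rfl fun ℓ _ => ?_
  rw [esymmEval, map_mul, map_pow, map_neg, map_one, mul_assoc]

lemma prod_X_sub_C_eq_sum_nodal (a e : ℕ → ℝ) (m : ℕ) :
    ∏ i ∈ range m, (X - C (e i)) =
      ∑ k ∈ range (m + 1), C (∑ ℓ ∈ range (m - k + 1),
        (-1) ^ ℓ * hsymmEval (k + 1) (m - k - ℓ) a * esymmEval m ℓ e) * nodal (range k) a := by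
  rw [prod_X_sub_C_eq_sum_esymmEval]
  simp_rw [X_pow_eq_sum_hsymmEval_mul_nodal a, Nat.sum_antidiagonal_eq_sum_range_succ_mk, mul_sum,
    map_sum, sum_mul]
  rw [sum_comm' (s' := fun k => range (m - k + 1)) (t' := range (m + 1))]
  · refine sum_congr rfl fun k _ => sum_congr rfl fun ℓ _ => ?_
    rw [Nat.sub_right_comm]; simp only [map_mul]; ring
  · intro ℓ k; simp only [mem_range]; omega

theorem statement7 (n : ℕ) (a e : ℕ → ℝ)
    (M : Matrix (Fin (n+1)) (Fin (n+1)) ℝ) (hM : IsCOB n a e M)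
    (m k : ℕ) (hk : k ≤ m) (hm : m ≤ n) :
    M ⟨m, by omega⟩ ⟨k, by omega⟩ =
      ∑ ℓ ∈ Finset.range (m - k + 1),
        (-1 : ℝ) ^ ℓ * hsymmEval (k + 1) (m - k - ℓ) a * esymmEval m ℓ e := by
  have h := (hM ⟨m, by omega⟩).symm.trans (prod_X_sub_C_eq_sum_nodal a e m)
  simp only [← smul_eq_C_mul, ← nodal_eq, ← newtonBasis_apply] at h
  have hval : ∀ x : Fin (n + 1), (x : ℕ) = k ↔ x = ⟨k, by omega⟩ := fun _ => by rw [Fin.ext_iff]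
  simpa [map_sum, Finsupp.single_apply, hval, Nat.lt_succ_of_le hk] using
    congrArg (fun p => (newtonBasis a).repr p k) h
end

section
/- For every n, the (n+1)×(n+1) matrix whose (m,k) entry (0 ≤ m,k ≤ n) is the unsigned Stirling number of the first kind c(m,k) is totally non-negative. -/
open Polynomial Finset

/-- A real square matrix is totally non-negative if every minor (determinant of a
square submatrix selected by strictly increasing row indices and strictly increasing
column indices) is non-negative. -/
def TNN {N : ℕ} (A : Matrix (Fin N) (Fin N) ℝ) : Prop :=
  ∀ (r : ℕ) (ρ γ : Fin r → Fin N), StrictMono ρ → StrictMono γ →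
    0 ≤ (A.submatrix ρ γ).det

/-- The number of cycles (orbits) of a permutation of `Fin m`: the number of
nontrivial cycles in its cycle decomposition plus the number of fixed points. -/
def cycleCount {m : ℕ} (σ : Equiv.Perm (Fin m)) : ℕ :=
  σ.cycleType.card + (Finset.univ.filter fun x => σ x = x).card

/-- `stirling1 m k`, the unsigned Stirling number of the first kind: the number of
permutations of an `m`-element set having exactly `k` cycles. -/
noncomputable def stirling1 (m k : ℕ) : ℕ :=
  Nat.card {σ : Equiv.Perm (Fin m) // cycleCount σ = k}

/-! Removing `0` from its cycle (the bijection `Equiv.Perm.decomposeFin`) shows that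
`stirling1` satisfies `c(m+1, k) = m c(m, k) + c(m, k-1)`, the recurrence defining
`Nat.stirlingFirst`. Read row by row, this recurrence builds the Stirling matrix `S` of size
`N + 1` from `diag(1, S')`, where `S'` has size `N`, by successively adding `m` times row `m` to
row `m + 1`. Both steps preserve total nonnegativity: a minor of `diag(1, A)` is a minor of `A`
or has a zero row or column, and adding `c ≥ 0` times row `i` to row `i + 1` changes a minor
through row `i + 1` by `c` times a minor of the old matrix, or by a determinant with two equal
rows. -/

namespace Equiv.Perm

variable {α : Type*} [DecidableEq α] [Fintype α]

theorem IsCycle.swap_mul_of_apply_eq_self {c : Perm α} (hc : c.IsCycle) {a b : α}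
    (ha : c a = a) (hb : c b ≠ b) : (swap a b * c).IsCycle := by
  set g := swap a b * c
  have hab : a ≠ b := by rintro rfl; exact hb ha
  have hga : g a = b := by simp [g, ha]
  have horbit (n : ℕ) : g.SameCycle a ((c ^ n) b) := by
    induction n with
    | zero => exact ⟨1, by simp [hga]⟩
    | succ n ih =>
      have hna : (c ^ (n + 1)) b ≠ a := fun h =>
        mem_support.1 (pow_apply_mem_support.2 (mem_support.2 hb)) (h ▸ ha)
      rw [pow_succ', mul_apply] at hna ⊢
      by_cases hnb : c ((c ^ n) b) = b
      · rw [hnb]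
        exact ⟨1, by simp [hga]⟩
      · have : g ((c ^ n) b) = c ((c ^ n) b) := swap_apply_of_ne_of_ne hna hnb
        exact this ▸ sameCycle_apply_right.2 ih
  refine ⟨a, hga ▸ hab.symm, fun y hy => ?_⟩
  by_cases hya : y = a
  · exact hya ▸ SameCycle.refl g a
  have hcy : c y ≠ y := by
    intro hcy
    have hyb : y ≠ b := by rintro rfl; exact hb hcy
    exact hy (by simp [g, hcy, swap_apply_of_ne_of_ne hya hyb])
  obtain ⟨n, -, rfl⟩ := (hc.sameCycle hb hcy).exists_pow_eq'
  exact horbit n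

theorem support_swap_mul_of_apply_eq_self {c : Perm α} {a b : α} (ha : c a = a)
    (hb : c b ≠ b) : (swap a b * c).support = insert a c.support := by
  set g := swap a b * c
  have hab : a ≠ b := by rintro rfl; exact hb ha
  have hga : g a = b := by simp [g, ha]
  have hcba : c b ≠ a := fun h => hb (c.injective (h.trans ha.symm) ▸ ha)
  -- `c` is recovered from `g` by splitting `a` off its cycle again
  have hc : swap a (g a) * g = c := by simp [g, hga, ← mul_assoc]
  have hgga : g (g a) ≠ a := by simpa [hga, g, swap_apply_of_ne_of_ne hcba hb] using hcba
  rw [← hc, support_swap_mul_eq g a hgga, sdiff_singleton_eq_erase,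
    insert_erase (mem_support.2 (hga ▸ hab.symm))]

theorem cycleType_swap_mul_of_apply_ne_self {τ : Perm α} {a b : α} (ha : τ a = a)
    (hb : τ b ≠ b) :
    ∃ L D, τ.cycleType = L ::ₘ D ∧ (swap a b * τ).cycleType = (L + 1) ::ₘ D := by
  set c := τ.cycleOf b
  set d := τ * c⁻¹
  have hc : c.IsCycle := isCycle_cycleOf τ hb
  have hca : c a = a := by simp [c, cycleOf_apply, ha]
  have hcb : c b ≠ b := by simpa [c] using hb
  have hcd : Disjoint c d :=
    (disjoint_mul_inv_of_mem_cycleFactorsFinset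
      (cycleOf_mem_cycleFactorsFinset_iff.2 (mem_support.2 hb))).symm
  have hτ : τ = c * d := by rw [hcd.commute.eq]; simp [d]
  have had : a ∉ d.support := fun h =>
    mem_support.1 (hτ ▸ hcd.support_mul ▸ mem_union_right _ h) ha
  have hgd : Disjoint (swap a b * c) d := by
    rw [disjoint_iff_disjoint_support, support_swap_mul_of_apply_eq_self hca hcb,
      disjoint_insert_left]
    exact ⟨had, disjoint_iff_disjoint_support.1 hcd⟩
  refine ⟨#c.support, d.cycleType, ?_, ?_⟩
  · rw [hτ, hcd.cycleType_mul, hc.cycleType, Multiset.singleton_add]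
  · rw [hτ, ← mul_assoc, hgd.cycleType_mul, (hc.swap_mul_of_apply_eq_self hca hcb).cycleType,
      support_swap_mul_of_apply_eq_self hca hcb, card_insert_of_notMem (notMem_support.2 hca),
      Multiset.singleton_add]

theorem cycleType_swap_mul_of_apply_eq_self {τ : Perm α} {a b : α} (hab : a ≠ b)
    (ha : τ a = a) (hb : τ b = b) : (swap a b * τ).cycleType = 2 ::ₘ τ.cycleType := by
  have hd : Disjoint (swap a b) τ := by
    rw [disjoint_iff_disjoint_support, support_swap hab]
    simp [ha, hb]
  rw [hd.cycleType_mul, (isCycle_swap hab).cycleType, card_support_swap hab,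
    Multiset.singleton_add]

lemma decomposeFin_symm_zero {m : ℕ} (e : Perm (Fin m)) :
    decomposeFin.symm (0, e) = e.extendDomain (finSuccAboveEquiv 0) := by
  ext x
  cases x using Fin.cases with
  | zero => simp [extendDomain_apply_not_subtype]
  | succ x =>
    have h := e.extendDomain_apply_image (finSuccAboveEquiv 0) x
    simp only [finSuccAboveEquiv_apply, Fin.succAbove_zero] at h
    simp [h]

lemma decomposeFin_symm_eq_swap_mul {m : ℕ} (p : Fin (m + 1)) (e : Perm (Fin m)) :
    decomposeFin.symm (p, e) = swap 0 p * decomposeFin.symm (0, e) := by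
  ext x
  cases x using Fin.cases <;> simp

end Equiv.Perm

open Equiv Equiv.Perm

lemma cycleCount_add_sum_cycleType {m : ℕ} (σ : Perm (Fin m)) :
    cycleCount σ + σ.cycleType.sum = Multiset.card σ.cycleType + m := by
  rw [cycleCount, sum_cycleType, add_assoc, Perm.support, card_filter_add_card_filter_not]
  simp

lemma cycleCount_swap_mul {m : ℕ} {τ : Perm (Fin m)} {a b : Fin m} (hab : a ≠ b)
    (ha : τ a = a) : cycleCount (swap a b * τ) + 1 = cycleCount τ := by
  have hτ := cycleCount_add_sum_cycleType τ
  have hσ := cycleCount_add_sum_cycleType (swap a b * τ)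
  by_cases hb : τ b = b
  · rw [cycleType_swap_mul_of_apply_eq_self hab ha hb] at hσ
    simp only [Multiset.sum_cons, Multiset.card_cons] at hσ
    omega
  · obtain ⟨L, D, hτD, hσD⟩ := cycleType_swap_mul_of_apply_ne_self ha hb
    rw [hτD] at hτ
    rw [hσD] at hσ
    simp only [Multiset.sum_cons, Multiset.card_cons] at hσ hτ
    omega

lemma cycleCount_decomposeFin_symm {m : ℕ} (p : Fin (m + 1)) (e : Perm (Fin m)) :
    cycleCount (decomposeFin.symm (p, e)) = cycleCount e + if p = 0 then 1 else 0 := by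
  have h0 : cycleCount (decomposeFin.symm (0, e)) = cycleCount e + 1 := by
    have h := cycleCount_add_sum_cycleType (decomposeFin.symm (0, e))
    rw [decomposeFin_symm_zero, cycleType_extendDomain] at h
    have := cycleCount_add_sum_cycleType e
    rw [decomposeFin_symm_zero]
    omega
  split_ifs with hp
  · rw [hp, h0]
  · rw [decomposeFin_symm_eq_swap_mul, ← add_right_cancel_iff (a := 1),
      cycleCount_swap_mul (Ne.symm hp) (decomposeFin_symm_apply_zero 0 e), h0]

lemma stirling1_eq_card (m k : ℕ) : stirling1 m k = #{σ : Perm (Fin m) | cycleCount σ = k} := by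
  rw [stirling1, Nat.card_eq_fintype_card, Fintype.card_subtype]

lemma stirling1_succ (m k : ℕ) :
    stirling1 (m + 1) k = m * stirling1 m k + #{e : Perm (Fin m) | cycleCount e + 1 = k} := by
  simp only [stirling1_eq_card, card_filter]
  rw [← Fintype.sum_equiv decomposeFin.symm _ _ fun _ => rfl, Fintype.sum_prod_type,
    Fin.sum_univ_succ]
  simp [cycleCount_decomposeFin_symm, Fin.succ_ne_zero, add_comm]

theorem stirling1_eq_stirlingFirst : stirling1 = Nat.stirlingFirst := by
  funext m k
  induction m generalizing k with
  | zero => cases k <;> simp [stirling1_eq_card, cycleCount, Finset.univ_unique, filter_eq']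
  | succ m ih =>
    rw [stirling1_succ, ih]
    cases k with
    | zero => cases m <;> simp
    | succ k => simp [← stirling1_eq_card, ih, Nat.stirlingFirst_succ_succ]

namespace Matrix

variable {R : Type*} {N : ℕ}

def blockDiagOne [Zero R] [One R] (A : Matrix (Fin N) (Fin N) R) :
    Matrix (Fin (N + 1)) (Fin (N + 1)) R :=
  of (Fin.cons (Fin.cons 1 0) fun i => Fin.cons 0 (A i))

section

variable [Zero R] [One R] (A : Matrix (Fin N) (Fin N) R)

@[simp] lemma blockDiagOne_zero_zero : blockDiagOne A 0 0 = 1 := rfl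

@[simp] lemma blockDiagOne_zero_succ (j : Fin N) : blockDiagOne A 0 j.succ = 0 := rfl

@[simp] lemma blockDiagOne_succ_zero (i : Fin N) : blockDiagOne A i.succ 0 = 0 := rfl

@[simp] lemma blockDiagOne_succ_succ (i j : Fin N) : blockDiagOne A i.succ j.succ = A i j := rfl

@[simp] lemma submatrix_succ_blockDiagOne : (blockDiagOne A).submatrix Fin.succ Fin.succ = A :=
  rfl

lemma submatrix_cons_zero_blockDiagOne {r : ℕ} (ρ γ : Fin r → Fin N) :
    (blockDiagOne A).submatrix (Fin.cons 0 (Fin.succ ∘ ρ)) (Fin.cons 0 (Fin.succ ∘ γ)) =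
      blockDiagOne (A.submatrix ρ γ) := by
  ext i j
  cases i using Fin.cases <;> cases j using Fin.cases <;> simp

end

@[simp] lemma det_blockDiagOne [CommRing R] (A : Matrix (Fin N) (Fin N) R) :
    (blockDiagOne A).det = A.det := by
  simp [det_succ_column_zero, Fin.sum_univ_succ]

variable {l m n o α : Type*} [DecidableEq l] (A : Matrix m n α)

lemma submatrix_update_left (ρ : l → m) (γ : o → n) (t : l) (i : m) :
    A.submatrix (Function.update ρ t i) γ = (A.submatrix ρ γ).updateRow t fun u => A i (γ u) := by
  ext s u
  rcases eq_or_ne s t with rfl | h <;> simp [*]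

lemma submatrix_updateRow_of_injective [DecidableEq m] {ρ : l → m} (hρ : ρ.Injective)
    (γ : o → n) (t : l) (v : n → α) :
    (A.updateRow (ρ t) v).submatrix ρ γ = (A.submatrix ρ γ).updateRow t (v ∘ γ) := by
  ext s u
  rcases eq_or_ne s t with rfl | h
  · simp
  · simp [h, hρ.ne h]

end Matrix

open Matrix

lemma StrictMono.exists_eq_succ_comp {ι : Type*} [Preorder ι] {N : ℕ} {ρ : ι → Fin (N + 1)}
    (hρ : StrictMono ρ) (h0 : ∀ i, ρ i ≠ 0) :
    ∃ ρ' : ι → Fin N, StrictMono ρ' ∧ ρ = Fin.succ ∘ ρ' :=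
  ⟨fun i => (ρ i).pred (h0 i), fun _ _ h => Fin.pred_lt_pred_iff.2 (hρ h),
    funext fun _ => (Fin.succ_pred _ _).symm⟩

lemma StrictMono.apply_ne_zero {r N : ℕ} {ρ : Fin (r + 1) → Fin (N + 1)} (hρ : StrictMono ρ)
    (h0 : ρ 0 ≠ 0) (i : Fin (r + 1)) : ρ i ≠ 0 :=
  ((Fin.pos_iff_ne_zero.2 h0).trans_le (hρ.monotone (Fin.zero_le i))).ne'

lemma StrictMono.exists_eq_cons_zero {r N : ℕ} {ρ : Fin (r + 1) → Fin (N + 1)}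
    (hρ : StrictMono ρ) (h0 : ρ 0 = 0) :
    ∃ ρ' : Fin r → Fin N, StrictMono ρ' ∧ ρ = Fin.cons 0 (Fin.succ ∘ ρ') := by
  obtain ⟨ρ', hρ', hρ'_eq⟩ := (hρ.comp Fin.strictMono_succ).exists_eq_succ_comp
    fun i => ((Fin.zero_le _).trans_lt (hρ i.succ_pos)).ne'
  exact ⟨ρ', hρ', by rw [← Fin.cons_self_tail ρ, h0, ← hρ'_eq]; rfl⟩

lemma StrictMono.update_of_eq_succ {r N : ℕ} {ρ : Fin r → Fin N} (hρ : StrictMono ρ)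
    {t : Fin r} {i : Fin N} (ht : (ρ t : ℕ) = i + 1) (hi : i ∉ Set.range ρ) :
    StrictMono (Function.update ρ t i) := by
  intro s u hsu
  have hs : (ρ s : ℕ) ≠ i := fun h => hi ⟨s, Fin.ext h⟩
  have hu : (ρ u : ℕ) ≠ i := fun h => hi ⟨u, Fin.ext h⟩
  have hρsu := hρ hsu
  rw [Fin.lt_def] at hρsu ⊢
  rcases eq_or_ne s t with rfl | hst
  · simp only [Function.update_self, Function.update_of_ne hsu.ne']
    omega
  rcases eq_or_ne u t with rfl | hut
  · simp only [Function.update_self, Function.update_of_ne hst]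
    omega
  · simpa only [Function.update_of_ne hst, Function.update_of_ne hut] using hρsu

theorem TNN.blockDiagOne {N : ℕ} {A : Matrix (Fin N) (Fin N) ℝ} (hA : TNN A) :
    TNN (blockDiagOne A) := by
  rintro (_ | r) ρ γ hρ hγ
  · simp
  by_cases hρ0 : ρ 0 = 0 <;> by_cases hγ0 : γ 0 = 0
  · obtain ⟨ρ', hρ', rfl⟩ := hρ.exists_eq_cons_zero hρ0
    obtain ⟨γ', hγ', rfl⟩ := hγ.exists_eq_cons_zero hγ0
    rw [submatrix_cons_zero_blockDiagOne, det_blockDiagOne]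
    exact hA _ _ _ hρ' hγ'
  · obtain ⟨γ', -, rfl⟩ := hγ.exists_eq_succ_comp (hγ.apply_ne_zero hγ0)
    rw [det_eq_zero_of_row_eq_zero 0 fun j => by simp [hρ0]]
  · obtain ⟨ρ', -, rfl⟩ := hρ.exists_eq_succ_comp (hρ.apply_ne_zero hρ0)
    rw [det_eq_zero_of_column_eq_zero 0 fun i => by simp [hγ0]]
  · obtain ⟨ρ', hρ', rfl⟩ := hρ.exists_eq_succ_comp (hρ.apply_ne_zero hρ0)
    obtain ⟨γ', hγ', rfl⟩ := hγ.exists_eq_succ_comp (hγ.apply_ne_zero hγ0)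
    exact hA _ _ _ hρ' hγ'

theorem TNN.updateRow_add_smul {N : ℕ} {A : Matrix (Fin N) (Fin N) ℝ} (hA : TNN A)
    {i j : Fin N} (hij : (j : ℕ) = i + 1) {c : ℝ} (hc : 0 ≤ c) :
    TNN (A.updateRow j (A j + c • A i)) := by
  intro r ρ γ hρ hγ
  by_cases hj : j ∈ Set.range ρ
  swap
  · have : (A.updateRow j (A j + c • A i)).submatrix ρ γ = A.submatrix ρ γ := by
      ext s u
      simp [updateRow_ne fun h => hj ⟨s, h⟩]
    exact this ▸ hA r ρ γ hρ hγ
  obtain ⟨t, rfl⟩ := hj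
  have hrow : (A (ρ t) + c • A i) ∘ γ = A.submatrix ρ γ t + c • fun u => A i (γ u) := rfl
  rw [submatrix_updateRow_of_injective _ hρ.injective, hrow, det_updateRow_add,
    updateRow_eq_self, det_updateRow_smul, ← submatrix_update_left]
  refine add_nonneg (hA _ _ _ hρ hγ) (mul_nonneg hc ?_)
  by_cases hi : i ∈ Set.range ρ
  · obtain ⟨s, rfl⟩ := hi
    have hst : s ≠ t := by rintro rfl; omega
    rw [det_zero_of_row_eq hst (by ext; simp [hst])]
  · exact hA _ _ _ (hρ.update_of_eq_succ hij hi) hγ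

theorem TNN.of_succ_row_eq_add_smul {N : ℕ} {A B : Matrix (Fin (N + 1)) (Fin (N + 1)) ℝ}
    (hB : TNN B) (c : Fin N → ℝ) (hc : ∀ i, 0 ≤ c i) (h0 : A 0 = B 0)
    (hsucc : ∀ i : Fin N, A i.succ = B i.succ + c i • A i.castSucc) : TNN A := by
  let M (j : ℕ) : Matrix (Fin (N + 1)) (Fin (N + 1)) ℝ :=
    of fun m => if (m : ℕ) ≤ j then A m else B m
  have hM0 : M 0 = B := by
    ext m k
    by_cases hm : m = 0 <;> simp [M, hm, h0]
  have hMsucc (i : Fin N) :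
      M (i + 1) = (M i).updateRow i.succ (M i i.succ + c i • M i i.castSucc) := by
    ext m k
    rcases eq_or_ne m i.succ with rfl | hm
    · simp [M, hsucc]
    · have : (m : ℕ) ≠ i + 1 := fun h => hm (Fin.ext h)
      simp [M, updateRow_ne hm, Nat.le_succ_iff, this]
  have hMN : M N = A := by
    ext m k
    simp [M, Fin.is_le]
  have key (j : ℕ) (hj : j ≤ N) : TNN (M j) := by
    induction j with
    | zero => exact hM0 ▸ hB
    | succ j ih =>
      rw [hMsucc ⟨j, hj⟩]
      exact (ih (by omega)).updateRow_add_smul rfl (hc _)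
  exact hMN ▸ key N le_rfl

theorem tnn_of_recurrence (a : ℕ → ℕ → ℝ) (c : ℕ → ℝ) (hc : ∀ m, 0 ≤ c m)
    (h0 : ∀ k, a 0 k = if k = 0 then 1 else 0) (hzero : ∀ m, a (m + 1) 0 = c m * a m 0)
    (hsucc : ∀ m k, a (m + 1) (k + 1) = c m * a m (k + 1) + a m k) (N : ℕ) :
    TNN (of fun m k : Fin N => a m k) := by
  induction N with
  | zero =>
    rintro (_ | r) ρ
    · simp
    · exact (ρ 0).elim0
  | succ N ih =>
    refine ih.blockDiagOne.of_succ_row_eq_add_smul (fun i => c i) (fun i => hc i) ?_ fun i => ?_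
    · ext k
      cases k using Fin.cases <;> simp [h0]
    · ext k
      cases k using Fin.cases
      · simp [hzero]
      · simp [hsucc]
        ring

theorem statement18 (n : ℕ) :
    TNN (Matrix.of fun m k : Fin (n+1) => (stirling1 (m : ℕ) (k : ℕ) : ℝ)) := by
  rw [stirling1_eq_stirlingFirst]
  refine tnn_of_recurrence (fun m k => Nat.stirlingFirst m k) (fun m => m) (fun m => m.cast_nonneg)
    (fun k => ?_) (fun m => ?_) (fun m k => ?_) (n + 1)
  · cases k <;> simp
  · cases m <;> simp
  · simp [Nat.stirlingFirst_succ_succ]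
end

section
/- For every n, the (n+1)×(n+1) matrix whose (m,k) entry (0 ≤ m,k ≤ n) is the Lah number L(m,k) is totally non-negative. -/
/-!
The Lah matrix is `exp N` for the nilpotent subdiagonal matrix `N` with `N (k+1) k = k (k+1)`:
indeed `(N ^ j) m k = ∏_{k ≤ i < m} i (i+1)` when `m = k + j`, and this product is
`L(m,k) (m-k)!`. Hence it is the limit of `(1 + N/t)^t`. The matrix `1 + N/t` is the product of
the elementary bidiagonal matrices `1 + c E_{k+1,k}` with `c ≥ 0`, and multiplying on the right by
such a matrix adds `c` times column `k+1` to column `k`. By multilinearity a minor of the product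
is the old minor plus `c` times a minor in which column `k` is replaced by column `k+1`, which is
either zero (repeated column) or again a minor of the old matrix with increasing columns. So powers
of `1 + N/t` are totally non-negative, and so is their limit, as the TNN matrices form a closed set.
-/

open Polynomial Finset

/-- The Lah numbers: `L(0,0) = 1`, `L(m,k) = (m!/k!) · C(m-1, k-1)` for
`1 ≤ k ≤ m`, and `L(m,k) = 0` otherwise. -/
def lah (m k : ℕ) : ℕ :=
  if m = 0 ∧ k = 0 then 1
  else if 1 ≤ k ∧ k ≤ m then (Nat.factorial m / Nat.factorial k) * Nat.choose (m - 1) (k - 1)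
  else 0

open Matrix Filter Topology
open scoped Nat

theorem StrictMono.update_of_covBy {ι α : Type*} [Preorder ι] [DecidableEq ι] [LinearOrder α]
    {f : ι → α} (hf : StrictMono f) {i : ι} {a : α} (hcov : f i ⋖ a) (ha : a ∉ Set.range f) :
    StrictMono (Function.update f i a) := by
  intro x y hxy
  rcases eq_or_ne x i with hx | hx <;> rcases eq_or_ne y i with hy | hy
  · exact absurd (hx.trans hy.symm) hxy.ne
  · rw [hx, Function.update_self, Function.update_of_ne hy]
    exact lt_of_le_of_ne (not_lt.1 (hcov.2 (hf (hx ▸ hxy)))) fun h => ha ⟨y, h.symm⟩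
  · rw [hy, Function.update_of_ne hx, Function.update_self]
    exact (hf (hy ▸ hxy)).trans hcov.lt
  · rw [Function.update_of_ne hx, Function.update_of_ne hy]
    exact hf hxy

theorem TNN.one {N : ℕ} : TNN (1 : Matrix (Fin N) (Fin N) ℝ) := by
  intro r ρ γ hρ hγ
  by_cases h : Set.range ρ = Set.range γ
  · rw [(hρ.range_inj hγ).1 h, submatrix_one _ hγ.injective, det_one]
    exact zero_le_one
  obtain ⟨i, hi⟩ | ⟨j, hj⟩ : (∃ i, ρ i ∉ Set.range γ) ∨ (∃ j, γ j ∉ Set.range ρ) := by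
    contrapose! h
    exact Set.Subset.antisymm (Set.range_subset_iff.2 h.1) (Set.range_subset_iff.2 h.2)
  · refine (det_eq_zero_of_row_eq_zero i fun j => ?_).ge
    exact one_apply_ne fun h => hi ⟨j, h.symm⟩
  · refine (det_eq_zero_of_column_eq_zero j fun i => ?_).ge
    exact one_apply_ne fun h => hj ⟨i, h⟩

theorem TNN.mul_one_add_single {N : ℕ} {A : Matrix (Fin N) (Fin N) ℝ} (hA : TNN A)
    {a b : Fin N} (hab : b ⋖ a) {c : ℝ} (hc : 0 ≤ c) : TNN (A * (1 + single a b c)) := by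
  intro r ρ γ hρ hγ
  by_cases hb : b ∈ Set.range γ
  swap
  · have : (A * (1 + single a b c)).submatrix ρ γ = A.submatrix ρ γ := by
      ext i j
      simp [mul_add, mul_single_apply_of_ne _ _ _ _ _ fun h => hb ⟨j, h⟩]
    exact this ▸ hA r ρ γ hρ hγ
  obtain ⟨j₀, rfl⟩ := hb
  have hsub : (A * (1 + single a (γ j₀) c)).submatrix ρ γ
      = (A.submatrix ρ γ).updateCol j₀ ((fun i => A (ρ i) (γ j₀)) + c • fun i => A (ρ i) a) := by
    ext i j
    rcases eq_or_ne j j₀ with rfl | hj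
    · simp [mul_add, mul_comm]
    · simp [mul_add, hj, mul_single_apply_of_ne _ _ _ _ _ (hγ.injective.ne hj)]
  have hupd : (A.submatrix ρ γ).updateCol j₀ (fun i => A (ρ i) a)
      = A.submatrix ρ (Function.update γ j₀ a) := by
    ext i j
    rcases eq_or_ne j j₀ with rfl | hj <;> simp [*]
  have hself : (A.submatrix ρ γ).updateCol j₀ (fun i => A (ρ i) (γ j₀)) = A.submatrix ρ γ :=
    updateCol_eq_self _ _
  rw [hsub, det_updateCol_add, det_updateCol_smul, hself, hupd]
  refine add_nonneg (hA r ρ γ hρ hγ) (mul_nonneg hc ?_)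
  by_cases ha : a ∈ Set.range γ
  · obtain ⟨j₁, rfl⟩ := ha
    have hj : j₀ ≠ j₁ := fun h => hab.lt.ne (congrArg γ h)
    refine (det_zero_of_column_eq hj fun i => ?_).ge
    simp [Function.update_of_ne hj.symm]
  · exact hA r ρ _ hρ (hγ.update_of_covBy hab ha)

theorem TNN.mul_one_add_sum_single {n : ℕ} {A : Matrix (Fin (n + 1)) (Fin (n + 1)) ℝ} (hA : TNN A)
    {c : Fin n → ℝ} (hc : ∀ i, 0 ≤ c i) (s : Finset (Fin n)) :
    TNN (A * (1 + ∑ i ∈ s, single i.succ i.castSucc (c i))) := by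
  induction s using induction_on_max with
  | empty => simpa using hA
  | insert a s has ih =>
    have hzero :
        (∑ i ∈ s, single i.succ i.castSucc (c i)) * single a.succ a.castSucc (c a) = 0 := by
      rw [sum_mul]
      refine sum_eq_zero fun i hi => single_mul_single_of_ne _ _ _ _ ?_ _
      intro h
      have hia : i < a := has i hi
      simp only [Fin.ext_iff, Fin.val_castSucc, Fin.val_succ] at h
      omega
    have hfactor : 1 + ∑ i ∈ insert a s, single i.succ i.castSucc (c i)
        = (1 + ∑ i ∈ s, single i.succ i.castSucc (c i)) * (1 + single a.succ a.castSucc (c a)) := by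
      rw [sum_insert fun h => (has a h).false, mul_add, add_mul, add_mul, hzero]
      simp only [mul_one, one_mul, add_zero]
      abel
    rw [hfactor, ← mul_assoc]
    exact TNN.mul_one_add_single ih (Fin.covBy_iff.2 (by simp [Order.covBy_add_one])) (hc a)

theorem isClosed_setOf_TNN (N : ℕ) : IsClosed {A : Matrix (Fin N) (Fin N) ℝ | TNN A} := by
  simp only [TNN, Set.ofPred_forall]
  exact isClosed_iInter fun r => isClosed_iInter fun ρ => isClosed_iInter fun γ =>
    isClosed_iInter fun _ => isClosed_iInter fun _ =>
      isClosed_le continuous_const (continuous_id.matrix_submatrix ρ γ).matrix_det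

theorem tendsto_choose_mul_inv_pow (j : ℕ) :
    Tendsto (fun t : ℕ => (t.choose j : ℝ) * ((t : ℝ)⁻¹) ^ j) atTop (𝓝 (j ! : ℝ)⁻¹) := by
  have hr : Tendsto (fun t : ℕ => (t : ℝ) * (t : ℝ)⁻¹) atTop (𝓝 1) :=
    tendsto_const_nhds.congr' <| (eventually_ne_atTop 0).mono fun t ht =>
      (mul_inv_cancel₀ (Nat.cast_ne_zero.2 ht)).symm
  simpa using ProbabilityTheory.tendsto_choose_mul_pow_atTop j hr

theorem one_add_smul_pow_eq_sum {A : Type*} [Ring A] [Algebra ℝ A] {a : A} {k : ℕ}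
    (ha : a ^ k = 0) (s : ℝ) {t : ℕ} (hkt : k ≤ t + 1) :
    (1 + s • a) ^ t = ∑ j ∈ range k, ((t.choose j : ℝ) * s ^ j) • a ^ j := by
  rw [add_comm, (Commute.one_right _).add_pow, ← sum_subset (range_subset_range.2 hkt)]
  · refine sum_congr rfl fun j _ => ?_
    rw [one_pow, mul_one, _root_.smul_pow, ← Nat.cast_comm, ← nsmul_eq_mul,
      ← Nat.cast_smul_eq_nsmul ℝ, smul_smul]
  · intro j _ hj
    rw [_root_.smul_pow, pow_eq_zero_of_le (by simpa using hj) ha, smul_zero, zero_mul, zero_mul]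

theorem tendsto_one_add_inv_smul_pow {A : Type*} [Ring A] [Algebra ℝ A] [TopologicalSpace A]
    [ContinuousAdd A] [ContinuousSMul ℝ A] {a : A} {k : ℕ} (ha : a ^ k = 0) :
    Tendsto (fun t : ℕ => (1 + (t : ℝ)⁻¹ • a) ^ t) atTop
      (𝓝 (∑ j ∈ range k, (j ! : ℝ)⁻¹ • a ^ j)) := by
  exact (tendsto_finsetSum _ fun j _ => (tendsto_choose_mul_inv_pow j).smul_const _).congr'
    ((eventually_ge_atTop k).mono fun t hkt => (one_add_smul_pow_eq_sum ha _ (by omega)).symm)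

noncomputable def lahGenerator (n : ℕ) : Matrix (Fin (n + 1)) (Fin (n + 1)) ℝ :=
  ∑ i : Fin n, single i.succ i.castSucc (((i : ℕ) : ℝ) * ((i : ℕ) + 1))

theorem lahGenerator_apply {n : ℕ} (m k : Fin (n + 1)) :
    lahGenerator n m k = if (m : ℕ) = k + 1 then ((k : ℕ) : ℝ) * ((k : ℕ) + 1) else 0 := by
  simp only [lahGenerator, Matrix.sum_apply, single_apply]
  induction k using Fin.lastCases with
  | last =>
    rw [sum_eq_zero fun i _ => if_neg fun h => Fin.castSucc_ne_last i h.2,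
      if_neg (by rw [Fin.val_last]; omega)]
  | cast k =>
    rw [Fintype.sum_eq_single k fun i hi => if_neg fun h => hi (Fin.castSucc_injective _ h.2)]
    simp [Fin.ext_iff, eq_comm]

theorem lahGenerator_pow_apply {n : ℕ} (j : ℕ) (m k : Fin (n + 1)) :
    (lahGenerator n ^ j) m k
      = if (m : ℕ) = k + j then ∏ i ∈ Ico (k : ℕ) m, (i : ℝ) * (i + 1) else 0 := by
  induction j generalizing m with
  | zero =>
    rcases eq_or_ne m k with rfl | h
    · simp
    · simp [one_apply_ne h, Fin.val_ne_of_ne h]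
  | succ j ih =>
    rw [pow_succ', mul_apply]
    induction m using Fin.cases with
    | zero => simp [lahGenerator_apply]
    | succ m =>
      rw [Fintype.sum_eq_single m.castSucc fun l hl => by
        rw [lahGenerator_apply, if_neg (by simpa [Fin.ext_iff] using hl.symm), zero_mul]]
      rw [lahGenerator_apply, ih]
      by_cases h : (m : ℕ) = k + j
      · simp [h, ← add_assoc, prod_Ico_succ_top, mul_comm]
      · simp [h, show (m : ℕ) + 1 ≠ k + (j + 1) by omega]

theorem lahGenerator_pow_eq_zero (n : ℕ) : lahGenerator n ^ (n + 1) = 0 := by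
  ext m k
  rw [lahGenerator_pow_apply, if_neg (by omega), Matrix.zero_apply]

theorem prod_Ico_mul_succ_mul_factorial {k m : ℕ} (hk : 1 ≤ k) (hkm : k ≤ m) :
    (∏ i ∈ Ico k m, i * (i + 1)) * (k ! * (k - 1)!) = m ! * (m - 1)! := by
  induction m, hkm using Nat.le_induction with
  | base => simp
  | succ m hkm ih =>
    rw [prod_Ico_succ_top hkm, mul_right_comm, ih, add_tsub_cancel_right, Nat.factorial_succ,
      ← Nat.mul_factorial_pred (by omega : m ≠ 0)]
    ring

theorem lah_mul_factorial_sub {k m : ℕ} (hkm : k ≤ m) :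
    lah m k * (m - k)! = ∏ i ∈ Ico k m, i * (i + 1) := by
  rcases Nat.eq_zero_or_pos k with rfl | hk
  · rcases Nat.eq_zero_or_pos m with rfl | hm
    · simp [lah]
    · rw [lah, if_neg (by omega), if_neg (by omega), zero_mul]
      exact (prod_eq_zero (mem_Ico.2 ⟨le_rfl, hm⟩) (zero_mul (0 + 1))).symm
  have hchoose : (m - 1).choose (k - 1) * (k - 1)! * (m - k)! = (m - 1)! := by
    have := Nat.choose_mul_factorial_mul_factorial (by omega : k - 1 ≤ m - 1)
    rwa [(by omega : m - 1 - (k - 1) = m - k)] at this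
  apply Nat.eq_of_mul_eq_mul_right (Nat.mul_pos k.factorial_pos (k - 1).factorial_pos)
  calc lah m k * (m - k)! * (k ! * (k - 1)!)
      = (m ! / k ! * k !) * ((m - 1).choose (k - 1) * (k - 1)! * (m - k)!) := by
        rw [lah, if_neg (by omega), if_pos ⟨hk, hkm⟩]
        ring
    _ = m ! * (m - 1)! := by rw [Nat.div_mul_cancel (Nat.factorial_dvd_factorial hkm), hchoose]
    _ = _ := (prod_Ico_mul_succ_mul_factorial hk hkm).symm

theorem of_lah_eq_sum_pow_lahGenerator (n : ℕ) :
    (of fun m k : Fin (n + 1) => (lah m k : ℝ))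
      = ∑ j ∈ range (n + 1), (j ! : ℝ)⁻¹ • lahGenerator n ^ j := by
  ext m k
  simp only [of_apply, Matrix.sum_apply, Matrix.smul_apply, lahGenerator_pow_apply, smul_eq_mul,
    mul_ite, mul_zero]
  rcases le_or_gt (k : ℕ) m with hkm | hmk
  · rw [sum_eq_single_of_mem (m - k : ℕ) (by simp; omega) fun j _ hj => if_neg (by omega),
      if_pos (by omega), eq_inv_mul_iff_mul_eq₀ (by positivity)]
    exact_mod_cast (mul_comm _ _).trans (lah_mul_factorial_sub hkm)
  · rw [lah, if_neg (by omega), if_neg (by omega), Nat.cast_zero]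
    exact (sum_eq_zero fun j _ => if_neg (by omega)).symm

theorem TNN.one_add_smul_lahGenerator_pow (n : ℕ) {s : ℝ} (hs : 0 ≤ s) (p : ℕ) :
    TNN ((1 + s • lahGenerator n) ^ p) := by
  have hsum : 1 + s • lahGenerator n
      = 1 + ∑ i : Fin n, single i.succ i.castSucc (s * ((i : ℕ) * ((i : ℕ) + 1))) := by
    simp only [lahGenerator, smul_sum, smul_single, smul_eq_mul]
  rw [hsum]
  induction p with
  | zero => simpa using TNN.one
  | succ p ih =>
    rw [pow_succ]
    exact TNN.mul_one_add_sum_single ih (fun i => by positivity) univ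

theorem statement19 (n : ℕ) :
    TNN (Matrix.of fun m k : Fin (n+1) => (lah (m : ℕ) (k : ℕ) : ℝ)) := by
  rw [of_lah_eq_sum_pow_lahGenerator]
  exact (isClosed_setOf_TNN _).mem_of_tendsto
    (tendsto_one_add_inv_smul_pow (lahGenerator_pow_eq_zero n))
    (.of_forall fun t => TNN.one_add_smul_lahGenerator_pow n (by positivity) t)
end
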